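/- arXiv:2303.16000 — 4 statements merged into one kernel-verified Lean document; each statement's English description precedes it below -/
import Mathlib

section
/- Let P be a polytope in ℝⁿ and let y₀ ∈ ℝⁿ \ {0}. Then there exist an open neighborhood U of y₀ and a face P' of P of dimension at most n−1 such that the support function of P' agrees with the support function of P on U. -/
/-!
The linear functional `⟪y₀, ·⟫` attains its maximum `M` on `P = conv S` exactly on the face
`F = P ∩ {⟪·, y₀⟫ = M}`, which lies in a hyperplane orthogonal to `y₀ ≠ 0` and so has dimension
at most `n - 1`. Let `T ⊆ S` be the points of `S` in `F`. The strict inequalities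
`⟪y, s⟫ < max_{t ∈ T} ⟪y, t⟫` for `s ∈ S \ T` hold at `y₀` and are open in `y`; wherever they hold,
the maximum of `⟪y, ·⟫` over `S`, which is `h_P(y)`, is attained on `T`, and `conv T ⊆ F ⊆ P`
forces `h_F(y) = h_P(y)`.
-/

open Module

section InnerProductSpace

variable {E : Type*} [NormedAddCommGroup E]

lemma finrank_vectorSpan_le_of_forall_inner_eq {𝕜 : Type*} [RCLike 𝕜] [InnerProductSpace 𝕜 E]
    [FiniteDimensional 𝕜 E] {v : E} (hv : v ≠ 0) {s : Set E} {c : 𝕜}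
    (hs : ∀ x ∈ s, inner 𝕜 x v = c) :
    finrank 𝕜 (vectorSpan 𝕜 s) ≤ finrank 𝕜 E - 1 := by
  have hle : vectorSpan 𝕜 s ≤ (𝕜 ∙ v)ᗮ := by
    rw [vectorSpan_def, Submodule.span_le]
    rintro _ ⟨a, ha, b, hb, rfl⟩
    rw [SetLike.mem_coe, Submodule.mem_orthogonal_singleton_iff_inner_left]
    simp only [vsub_eq_sub, inner_sub_left, hs a ha, hs b hb, sub_self]
  have hcompl := (𝕜 ∙ v).finrank_add_finrank_orthogonal
  rw [finrank_span_singleton hv] at hcompl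
  have := Submodule.finrank_mono hle
  omega

variable [InnerProductSpace ℝ E]

lemma isGreatest_inner_image_of_convexHull_subset {T : Finset E} (hT : T.Nonempty) {S F : Set E}
    (hTF : convexHull ℝ (T : Set E) ⊆ F) (hFS : F ⊆ convexHull ℝ S) {y : E}
    (hy : ∀ s ∈ S, inner ℝ y s ≤ T.sup' hT fun t => inner ℝ y t) :
    IsGreatest ((fun z => inner ℝ y z) '' F) (T.sup' hT fun t => inner ℝ y t) := by
  constructor
  · obtain ⟨t, ht, hmax⟩ := T.exists_mem_eq_sup' hT fun t => inner ℝ y t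
    exact ⟨t, hTF (subset_convexHull ℝ _ ht), hmax.symm⟩
  · rintro _ ⟨x, hx, rfl⟩
    obtain ⟨s, hs, hxs⟩ := ((innerₛₗ ℝ y).convexOn convex_univ).exists_ge_of_mem_convexHull
      (Set.subset_univ S) (hFS hx)
    exact hxs.trans (hy s hs)

lemma convexHull_filter_inner_eq_subset (S : Finset E) (v : E) (c : ℝ) :
    convexHull ℝ (S.filter fun s => inner ℝ v s = c : Set E) ⊆
      {x ∈ convexHull ℝ (S : Set E) | inner ℝ x v = c} := by
  have hplane : Convex ℝ {x : E | inner ℝ x v = c} := by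
    simpa only [innerₛₗ_apply_apply, real_inner_comm v] using
      convex_hyperplane (innerₛₗ ℝ v).isLinear c
  refine convexHull_min (fun t ht => ?_) ((convex_convexHull ℝ _).inter hplane)
  have ht := Finset.mem_filter.1 ht
  exact ⟨subset_convexHull ℝ _ ht.1, real_inner_comm v t ▸ ht.2⟩

lemma isOpen_biInter_inner_lt_sup' (S : Finset E) {T : Finset E} (hT : T.Nonempty) :
    IsOpen (⋂ s ∈ S, {y : E | inner ℝ y s < T.sup' hT fun t => inner ℝ y t}) :=
  isOpen_biInter_finset fun _ _ => isOpen_lt (by fun_prop)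
    (Continuous.finset_sup'_apply hT fun _ _ => by fun_prop)

end InnerProductSpace

open EuclideanSpace in
/-- Support function of the face of a polytope agrees with that of the polytope
near any nonzero direction, and the face has dimension at most `n - 1`. -/
theorem stmt0 (n : ℕ) (S : Finset (EuclideanSpace ℝ (Fin n))) (hS : S.Nonempty)
    (y₀ : EuclideanSpace ℝ (Fin n)) (hy₀ : y₀ ≠ 0) :
    ∃ U : Set (EuclideanSpace ℝ (Fin n)), IsOpen U ∧ y₀ ∈ U ∧
      Module.finrank ℝ
        (vectorSpan ℝ {x ∈ convexHull ℝ (S : Set (EuclideanSpace ℝ (Fin n))) |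
          (inner ℝ x y₀ : ℝ) =
            sSup ((fun z => (inner ℝ y₀ z : ℝ)) '' convexHull ℝ (S : Set (EuclideanSpace ℝ (Fin n))))})
        ≤ n - 1 ∧
      ∀ y ∈ U,
        sSup ((fun z => (inner ℝ y z : ℝ)) ''
            {x ∈ convexHull ℝ (S : Set (EuclideanSpace ℝ (Fin n))) |
              (inner ℝ x y₀ : ℝ) =
                sSup ((fun z => (inner ℝ y₀ z : ℝ)) ''
                  convexHull ℝ (S : Set (EuclideanSpace ℝ (Fin n))))}) =
          sSup ((fun z => (inner ℝ y z : ℝ)) '' convexHull ℝ (S : Set (EuclideanSpace ℝ (Fin n)))) := by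
  set P := convexHull ℝ (S : Set (EuclideanSpace ℝ (Fin n)))
  set M := S.sup' hS fun s => inner ℝ y₀ s
  have hM : sSup ((fun z => inner ℝ y₀ z) '' P) = M :=
    (isGreatest_inner_image_of_convexHull_subset hS subset_rfl subset_rfl
      fun s hs => S.le_sup' _ hs).csSup_eq
  rw [hM]
  set T := S.filter fun s => inner ℝ y₀ s = M
  have hT : T.Nonempty := by
    obtain ⟨s, hs, hmax⟩ := S.exists_mem_eq_sup' hS fun s => inner ℝ y₀ s
    exact ⟨s, Finset.mem_filter.2 ⟨hs, hmax.symm⟩⟩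
  refine ⟨⋂ s ∈ S \ T, {y | inner ℝ y s < T.sup' hT fun t => inner ℝ y t}, ?_, ?_, ?_, ?_⟩
  · exact isOpen_biInter_inner_lt_sup' _ hT
  · simp only [Set.mem_iInter, Set.mem_ofPred_eq, Finset.mem_sdiff]
    rintro s ⟨hs, hsT⟩
    obtain ⟨t, ht⟩ := hT
    calc inner ℝ y₀ s < M :=
          (S.le_sup' _ hs).lt_of_ne fun h => hsT (Finset.mem_filter.2 ⟨hs, h⟩)
      _ = inner ℝ y₀ t := (Finset.mem_filter.1 ht).2.symm
      _ ≤ _ := T.le_sup' _ ht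
  · exact (finrank_vectorSpan_le_of_forall_inner_eq hy₀ fun x hx => hx.2).trans_eq
      (by rw [finrank_euclideanSpace_fin])
  · intro y hy
    simp only [Set.mem_iInter, Set.mem_ofPred_eq, Finset.mem_sdiff] at hy
    have hdom : ∀ s ∈ (S : Set _), inner ℝ y s ≤ T.sup' hT fun t => inner ℝ y t := fun s hs =>
      if hsT : s ∈ T then T.le_sup' _ hsT else (hy s ⟨hs, hsT⟩).le
    rw [(isGreatest_inner_image_of_convexHull_subset hT
      (convexHull_filter_inner_eq_subset S y₀ M) (fun x hx => hx.1) hdom).csSup_eq,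
      (isGreatest_inner_image_of_convexHull_subset hT
        (convexHull_mono (Finset.coe_subset.2 (Finset.filter_subset _ S))) subset_rfl hdom).csSup_eq]
end

section
/- A sequence (K_j) of nonempty compact convex subsets of ℝⁿ converges to a nonempty compact convex set K in the Hausdorff metric if and only if the support functions h_{K_j} converge to h_K uniformly on every compact subset of ℝⁿ. -/
/-!
Nearest points give both directions. If `z` is the point of `L` closest to `x`, then
`⟪y, x⟫ ≤ ⟪y, z⟫ + ‖y‖ ‖x - z‖`, so `h_K ≤ h_L + ‖·‖ d_H(K, L)`, and Hausdorff convergence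
makes the support functions converge uniformly on bounded sets. Conversely, when `L` is convex
the unit vector `y` pointing from `z` to `x` satisfies `⟪y, x⟫ - h_L(y) = dist(x, L)`, so
`d_H(K, L)` is bounded by the uniform distance of `h_K` and `h_L` on the unit ball.
-/

open Metric Filter Topology
open scoped InnerProductSpace

lemma tendstoUniformlyOn_of_dist_le {ι α β : Type*} [PseudoMetricSpace β] {F : ι → α → β}
    {f : α → β} {p : Filter ι} {s : Set α} {a : ι → ℝ} (ha : Tendsto a p (𝓝 0))
    (h : ∀ i, ∀ x ∈ s, dist (f x) (F i x) ≤ a i) : TendstoUniformlyOn F f p s :=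
  tendstoUniformlyOn_iff.2 fun _ hε =>
    (ha.eventually (gt_mem_nhds hε)).mono fun i hi x hx => (h i x hx).trans_lt hi

section SupportFunction

variable {E : Type*} [NormedAddCommGroup E] [InnerProductSpace ℝ E]

noncomputable def supportFunction (S : Set E) (y : E) : ℝ :=
  sSup ((fun x => ⟪y, x⟫_ℝ) '' S)

lemma IsCompact.inner_le_supportFunction {S : Set E} (hS : IsCompact S) (y : E) {x : E}
    (hx : x ∈ S) : ⟪y, x⟫_ℝ ≤ supportFunction S y :=
  le_csSup (hS.image (continuous_const.inner continuous_id)).bddAbove ⟨x, hx, rfl⟩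

lemma supportFunction_le {S : Set E} (hS : S.Nonempty) {y : E} {c : ℝ}
    (h : ∀ x ∈ S, ⟪y, x⟫_ℝ ≤ c) : supportFunction S y ≤ c :=
  csSup_le (hS.image _) (Set.forall_mem_image.2 h)

lemma IsCompact.inner_le_supportFunction_add_norm_mul_infDist {L : Set E} (hL : IsCompact L)
    (hLne : L.Nonempty) (y x : E) :
    ⟪y, x⟫_ℝ ≤ supportFunction L y + ‖y‖ * infDist x L := by
  obtain ⟨z, hzL, hdist⟩ := hL.exists_infDist_eq_dist hLne x
  calc ⟪y, x⟫_ℝ = ⟪y, z⟫_ℝ + ⟪y, x - z⟫_ℝ := by rw [inner_sub_right]; ring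
    _ ≤ supportFunction L y + ‖y‖ * ‖x - z‖ :=
      add_le_add (hL.inner_le_supportFunction y hzL) (real_inner_le_norm y (x - z))
    _ = supportFunction L y + ‖y‖ * infDist x L := by rw [hdist, dist_eq_norm]

lemma supportFunction_le_add_norm_mul_hausdorffDist {K L : Set E} (hK : IsCompact K)
    (hKne : K.Nonempty) (hL : IsCompact L) (hLne : L.Nonempty) (y : E) :
    supportFunction K y ≤ supportFunction L y + ‖y‖ * hausdorffDist K L := by
  have hfin := hausdorffEDist_ne_top_of_nonempty_of_bounded hKne hLne hK.isBounded hL.isBounded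
  refine supportFunction_le hKne fun x hx => ?_
  calc ⟪y, x⟫_ℝ ≤ supportFunction L y + ‖y‖ * infDist x L :=
        hL.inner_le_supportFunction_add_norm_mul_infDist hLne y x
    _ ≤ supportFunction L y + ‖y‖ * hausdorffDist K L := by
        gcongr; exact infDist_le_hausdorffDist_of_mem hx hfin

lemma abs_supportFunction_sub_le {K L : Set E} (hK : IsCompact K) (hKne : K.Nonempty)
    (hL : IsCompact L) (hLne : L.Nonempty) (y : E) :
    |supportFunction K y - supportFunction L y| ≤ ‖y‖ * hausdorffDist K L := by
  have hKL := supportFunction_le_add_norm_mul_hausdorffDist hK hKne hL hLne y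
  have hLK := supportFunction_le_add_norm_mul_hausdorffDist hL hLne hK hKne y
  rw [hausdorffDist_comm] at hLK
  exact abs_sub_le_iff.2 ⟨by linarith, by linarith⟩

/-- Separation from a compact convex set: the witness is the unit vector from the nearest point
`z ∈ L` towards `x` (or `0` if `x ∈ L`); the obtuse angle criterion for `z` says that
`⟪y, ·⟫` is maximised on `L` at `z`. -/
lemma Convex.exists_norm_le_one_infDist_le_inner_sub_supportFunction {L : Set E}
    (hLconv : Convex ℝ L) (hL : IsCompact L) (hLne : L.Nonempty) (x : E) :
    ∃ y : E, ‖y‖ ≤ 1 ∧ infDist x L ≤ ⟪y, x⟫_ℝ - supportFunction L y := by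
  obtain ⟨z, hzL, hdist⟩ := hL.exists_infDist_eq_dist hLne x
  have hnearest : ‖x - z‖ = ⨅ w : L, ‖x - w‖ := by
    simpa only [dist_eq_norm, hdist] using (infDist_eq_iInf (x := x) (s := L))
  have hobtuse := (norm_eq_iInf_iff_real_inner_le_zero hLconv hzL).1 hnearest
  refine ⟨‖x - z‖⁻¹ • (x - z), ?_, ?_⟩
  · rw [norm_smul, norm_inv, norm_norm]
    exact inv_mul_le_one
  have hsupp : supportFunction L (‖x - z‖⁻¹ • (x - z)) ≤ ⟪‖x - z‖⁻¹ • (x - z), z⟫_ℝ := by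
    refine supportFunction_le hLne fun w hw => ?_
    have hw' : ⟪x - z, w⟫_ℝ ≤ ⟪x - z, z⟫_ℝ := by
      have := hobtuse w hw
      rw [inner_sub_right] at this
      linarith
    simp only [real_inner_smul_left]
    exact mul_le_mul_of_nonneg_left hw' (inv_nonneg.2 (norm_nonneg _))
  have hgap : ⟪‖x - z‖⁻¹ • (x - z), x⟫_ℝ - ⟪‖x - z‖⁻¹ • (x - z), z⟫_ℝ = ‖x - z‖ := by
    rw [← inner_sub_right, real_inner_smul_left, real_inner_self_eq_norm_sq]
    rcases eq_or_ne ‖x - z‖ 0 with h | h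
    · simp [h]
    · field_simp
  rw [hdist, dist_eq_norm]
  linarith

lemma hausdorffDist_le_of_dist_supportFunction_le {K L : Set E} (hKconv : Convex ℝ K)
    (hK : IsCompact K) (hKne : K.Nonempty) (hLconv : Convex ℝ L) (hL : IsCompact L)
    (hLne : L.Nonempty) {c : ℝ} (hc : 0 ≤ c)
    (h : ∀ y ∈ closedBall (0 : E) 1, dist (supportFunction L y) (supportFunction K y) ≤ c) :
    hausdorffDist K L ≤ c := by
  have hbound : ∀ y : E, ‖y‖ ≤ 1 → |supportFunction K y - supportFunction L y| ≤ c := by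
    intro y hy
    rw [abs_sub_comm, ← Real.dist_eq]
    exact h y (mem_closedBall_zero_iff.2 hy)
  refine hausdorffDist_le_of_infDist hc (fun x hx => ?_) (fun x hx => ?_)
  · obtain ⟨y, hy, hsep⟩ :=
      hLconv.exists_norm_le_one_infDist_le_inner_sub_supportFunction hL hLne x
    linarith [hK.inner_le_supportFunction y hx, (abs_le.1 (hbound y hy)).2]
  · obtain ⟨y, hy, hsep⟩ :=
      hKconv.exists_norm_le_one_infDist_le_inner_sub_supportFunction hK hKne x
    linarith [hL.inner_le_supportFunction y hx, (abs_le.1 (hbound y hy)).1]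

end SupportFunction

/-- Hausdorff convergence of nonempty compact convex sets is equivalent to
locally uniform convergence of the support functions. -/
theorem stmt2 (n : ℕ) (K : ℕ → Set (EuclideanSpace ℝ (Fin n))) (L : Set (EuclideanSpace ℝ (Fin n)))
    (hKne : ∀ j, (K j).Nonempty) (hKc : ∀ j, IsCompact (K j)) (hKconv : ∀ j, Convex ℝ (K j))
    (hLne : L.Nonempty) (hLc : IsCompact L) (hLconv : Convex ℝ L) :
    Filter.Tendsto (fun j => Metric.hausdorffDist (K j) L) Filter.atTop (nhds 0) ↔
      ∀ C : Set (EuclideanSpace ℝ (Fin n)), IsCompact C →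
        TendstoUniformlyOn (fun j y => sSup ((fun x => (inner ℝ y x : ℝ)) '' K j))
          (fun y => sSup ((fun x => (inner ℝ y x : ℝ)) '' L)) Filter.atTop C := by
  change _ ↔ ∀ C, IsCompact C →
    TendstoUniformlyOn (fun j => supportFunction (K j)) (supportFunction L) atTop C
  constructor
  · intro hconv C hC
    obtain ⟨R, hR⟩ := hC.isBounded.subset_closedBall 0
    refine tendstoUniformlyOn_of_dist_le (by simpa using hconv.const_mul R) fun j y hy => ?_
    rw [Real.dist_eq, hausdorffDist_comm]
    refine (abs_supportFunction_sub_le hLc hLne (hKc j) (hKne j) y).trans ?_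
    exact mul_le_mul_of_nonneg_right (mem_closedBall_zero_iff.1 (hR hy)) hausdorffDist_nonneg
  · intro hunif
    refine Metric.tendsto_nhds.2 fun ε hε => ?_
    filter_upwards [tendstoUniformlyOn_iff.1 (hunif _ (isCompact_closedBall 0 1)) (ε / 2)
      (half_pos hε)] with j hj
    have hle := hausdorffDist_le_of_dist_supportFunction_le (hKconv j) (hKc j) (hKne j) hLconv
      hLc hLne (half_pos hε).le fun y hy => (hj y hy).le
    rw [Real.dist_eq, sub_zero, abs_of_nonneg hausdorffDist_nonneg]
    linarith
end

section
/- The ideal of polynomial functions on the space of complex symmetric n×n matrices that vanish on all symmetric matrices of rank strictly less than k is a prime ideal. -/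
open MvPolynomial

/-- The ideal of polynomial functions on the space of complex symmetric `n×n`
matrices (coordinates indexed by pairs `i ≤ j`) vanishing on all symmetric
matrices of rank strictly less than `k`. -/
noncomputable def vanishingIdealRankLT (n k : ℕ) :
    Ideal (MvPolynomial {p : Fin n × Fin n // p.1 ≤ p.2} ℂ) where
  carrier := {P | ∀ A : Matrix (Fin n) (Fin n) ℂ, A.IsSymm → A.rank < k →
    MvPolynomial.eval (fun v => A v.1.1 v.1.2) P = 0}
  zero_mem' := by intro A _ _; simp
  add_mem' := by
    intro P Q hP hQ A hA hr
    simp [map_add, hP A hA hr, hQ A hA hr]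
  smul_mem' := by
    intro c P hP A hA hr
    simp [smul_eq_mul, map_mul, hP A hA hr]

/-!
A symmetric matrix has rank at most `r` iff it is `∑_{l < r} w_l a_l a_lᵀ`: diagonalizing its
bilinear form in an orthogonal basis gives such a sum with one term per nonzero diagonal entry.
Hence the ideal is the kernel of the substitution `x_{ij} ↦ ∑_{l < k-1} w_l a_{li} a_{lj}` into
a polynomial ring over `ℂ`, since over an infinite field a polynomial vanishing at every point
is zero. A kernel of a map into a domain is prime.
-/

theorem LinearMap.IsOrthoᵢ.sum_repr_smul_repr_smul {R M M₁ ι : Type*} [CommSemiring R]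
    [AddCommMonoid M] [Module R M] [AddCommMonoid M₁] [Module R M₁] [Fintype ι]
    {B : M →ₗ[R] M →ₗ[R] M₁} {v : Module.Basis ι R M} (hv : B.IsOrthoᵢ v) (x y : M) :
    ∑ i, v.repr x i • v.repr y i • B (v i) (v i) = B x y := by
  classical
  conv_rhs => rw [← v.sum_repr x, ← v.sum_repr y]
  simp only [map_sum, map_smul, LinearMap.coe_sum, Finset.sum_apply, LinearMap.smul_apply]
  refine Finset.sum_congr rfl fun i _ => ?_
  rw [Finset.sum_eq_single i (fun j _ hji => by simp [hv hji]) (by simp), smul_comm]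

theorem Fintype.exists_sum_fin_smul_eq {R M α ι : Type*} [Semiring R] [DecidableEq R]
    [AddCommMonoid M] [Module R M] [Zero α] [Fintype ι] {r : ℕ} (w : ι → R) (a : ι → α)
    (F : α → M) (h : Fintype.card {i // w i ≠ 0} ≤ r) :
    ∃ (w' : Fin r → R) (a' : Fin r → α), ∑ j, w' j • F (a' j) = ∑ i, w i • F (a i) := by
  obtain ⟨e⟩ := Function.Embedding.nonempty_of_card_le (h.trans_eq (Fintype.card_fin r).symm)
  refine ⟨Function.extend e (w ∘ (↑)) 0, Function.extend e (a ∘ (↑)) 0, Eq.symm ?_⟩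
  calc ∑ i, w i • F (a i) = ∑ i : {i // w i ≠ 0}, w i • F (a i) := by
        rw [← Finset.sum_filter_of_ne (p := fun i => w i ≠ 0) fun i _ hi hw => hi (by simp [hw])]
        exact Finset.sum_subtype _ (by simp) _
    _ = _ := Fintype.sum_of_injective e e.injective _ _
        (fun j hj => by rw [Function.extend_apply' _ _ _ (by simpa using hj)]; simp)
        (fun i => by simp [e.injective.extend_apply])

namespace Matrix

section Rank

variable {m n K : Type*} [Field K] [Fintype n]

theorem rank_add_le (A B : Matrix m n K) : (A + B).rank ≤ A.rank + B.rank := by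
  rw [rank, rank, rank, mulVecLin_add]
  exact (Submodule.finrank_mono (LinearMap.range_add_le _ _)).trans
    (Submodule.finrank_add_le_finrank_add_finrank _ _)

theorem rank_sum_le {ι : Type*} (s : Finset ι) (A : ι → Matrix m n K) :
    (∑ i ∈ s, A i).rank ≤ ∑ i ∈ s, (A i).rank := by
  classical
  induction s using Finset.induction_on with
  | empty => simp
  | insert i s hi ih =>
    rw [Finset.sum_insert hi, Finset.sum_insert hi]
    exact (rank_add_le _ _).trans (by gcongr)

end Rank

variable {K n : Type*} [Field K] [Fintype n]

theorem IsSymm.exists_sum_smul_vecMulVec [Invertible (2 : K)] {A : Matrix n n K}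
    (hA : A.IsSymm) {r : ℕ} (hr : A.rank ≤ r) :
    ∃ (w : Fin r → K) (a : Fin r → n → K), A = ∑ i, w i • vecMulVec (a i) (a i) := by
  classical
  set B := toBilin' A
  obtain ⟨v, hv⟩ := LinearMap.BilinForm.exists_orthogonal_basis
    (LinearMap.BilinForm.isSymm_iff.mp (isSymm_toBilin'_iff_isSymm.mpr hA))
  set d := fun i => B (v i) (v i)
  set c := fun i (p : n) => v.repr (Pi.single p 1) i
  have hdiag : of ⇑v * A * (of ⇑v)ᵀ = diagonal d := by
    ext i j
    have hentry : (of ⇑v * A * (of ⇑v)ᵀ) i j = B (v i) (v j) := by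
      simp only [B, toBilin'_apply, mul_apply, transpose_apply, of_apply, Finset.sum_mul]
      exact Finset.sum_comm
    rw [hentry, diagonal_apply]
    split_ifs with hij
    · rw [hij]
    · exact hv hij
  have hcard : Fintype.card {i // d i ≠ 0} ≤ r := by
    rw [← rank_diagonal, ← hdiag]
    exact (rank_mul_le_left _ _).trans ((rank_mul_le_right _ _).trans hr)
  obtain ⟨w, a, hwa⟩ := Fintype.exists_sum_fin_smul_eq d c (fun x => vecMulVec x x) hcard
  refine ⟨w, a, (hwa.trans ?_).symm⟩
  ext p q
  rw [← toBilin'_single A p q, ← hv.sum_repr_smul_repr_smul]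
  simp only [sum_apply, smul_apply, vecMulVec_apply, smul_eq_mul, c, d, B]
  exact Finset.sum_congr rfl fun i _ => by ring

theorem isSymm_and_rank_le_iff [Invertible (2 : K)] {A : Matrix n n K} {r : ℕ} :
    A.IsSymm ∧ A.rank ≤ r ↔
      ∃ (w : Fin r → K) (a : Fin r → n → K), A = ∑ i, w i • vecMulVec (a i) (a i) := by
  refine ⟨fun ⟨hA, hr⟩ => hA.exists_sum_smul_vecMulVec hr, ?_⟩
  rintro ⟨w, a, rfl⟩
  refine ⟨by simp [IsSymm, transpose_sum], ?_⟩
  calc (∑ i, w i • vecMulVec (a i) (a i)).rank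
      ≤ ∑ i, (vecMulVec (w i • a i) (a i)).rank := by
        simpa only [smul_vecMulVec] using rank_sum_le _ _
    _ ≤ ∑ _i : Fin r, 1 := Finset.sum_le_sum fun i _ => rank_vecMulVec_le _ _
    _ = r := by simp

end Matrix

theorem MvPolynomial.eval_aeval {R σ τ : Type*} [CommSemiring R] (x : τ → R)
    (g : σ → MvPolynomial τ R) (P : MvPolynomial σ R) :
    eval x (aeval g P) = eval (fun i => eval x (g i)) P := by
  rw [aeval_eq_bind₁]
  exact aeval_bind₁ x g P

theorem MvPolynomial.aeval_eq_zero_iff {R σ τ : Type*} [CommRing R] [IsDomain R] [Infinite R]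
    (g : σ → MvPolynomial τ R) (P : MvPolynomial σ R) :
    aeval g P = 0 ↔ ∀ x : τ → R, eval (fun i => eval x (g i)) P = 0 := by
  simp only [funext_iff, eval_aeval, map_zero]

open Matrix

noncomputable def symmRankParam (n r : ℕ) (v : {p : Fin n × Fin n // p.1 ≤ p.2}) :
    MvPolynomial (Fin r ⊕ Fin r × Fin n) ℂ :=
  ∑ i, X (.inl i) * X (.inr (i, v.1.1)) * X (.inr (i, v.1.2))

theorem eval_symmRankParam {n r : ℕ} (x : Fin r ⊕ Fin r × Fin n → ℂ)
    (v : {p : Fin n × Fin n // p.1 ≤ p.2}) :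
    eval x (symmRankParam n r v) =
      (∑ i, x (.inl i) • vecMulVec (fun p => x (.inr (i, p))) (fun p => x (.inr (i, p))))
        v.1.1 v.1.2 := by
  simp [symmRankParam, Matrix.sum_apply, vecMulVec_apply, mul_assoc]

theorem vanishingIdealRankLT_eq_ker {n k : ℕ} (hk : 1 ≤ k) :
    vanishingIdealRankLT n k = RingHom.ker (aeval (symmRankParam n (k - 1))) := by
  ext P
  rw [RingHom.mem_ker, aeval_eq_zero_iff]
  simp only [eval_symmRankParam]
  constructor
  · intro hP x
    refine hP _ (isSymm_and_rank_le_iff.mpr ⟨_, _, rfl⟩).1 ?_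
    exact Nat.lt_of_le_sub_one hk (isSymm_and_rank_le_iff.mpr ⟨_, _, rfl⟩).2
  · intro hP A hA hr
    obtain ⟨w, a, rfl⟩ := isSymm_and_rank_le_iff.mp ⟨hA, Nat.le_sub_one_of_lt hr⟩
    simpa using hP (Sum.elim w fun ip => a ip.1 ip.2)

/-- The ideal of polynomials on complex symmetric matrices vanishing on
matrices of rank `< k` is prime. -/
theorem stmt8 (n k : ℕ) (hk : 1 ≤ k) : (vanishingIdealRankLT n k).IsPrime := by
  rw [vanishingIdealRankLT_eq_ker hk]
  exact RingHom.ker_isPrime _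
end

section
/- Let E ⊆ ℝⁿ be a k-dimensional linear subspace with orthogonal complement E^⊥, and let μ be a Radon measure on ℝⁿ that is invariant under translations by vectors in E^⊥, i.e., μ(B + x) = μ(B) for all Borel sets B and x ∈ E^⊥. Then the pushforward of μ restricted by any compactly supported continuous function φ ∘ π_E (where π_E is orthogonal projection onto E) along the orthogonal projection π_{E^⊥} is a scalar multiple of Lebesgue measure on E^⊥. -/
/-!
Translating by `v ∈ E^⊥` fixes `π_E`, so the weighted measure `μ⌞(φ⁺∘π_E)` is still
`E^⊥`-invariant, and its pushforward along `π_{E^⊥}` is a translation-invariant measure on `E^⊥`.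
It is finite on compact sets because over a compact `C ⊆ E^⊥` the weight vanishes off the compact
set `tsupport φ + C`. By uniqueness of Haar measure it is therefore a multiple of the
`dim E^⊥`-dimensional Hausdorff measure on `E^⊥`; the same holds for `φ⁻`, and subtracting gives
the claim.
-/

open MeasureTheory Module Submodule
open scoped ENNReal NNReal

namespace MeasureTheory.Measure

variable {G : Type*} [AddGroup G] [MeasurableSpace G] [MeasurableAdd G] {μ : Measure G} {v : G}

theorem map_add_right_eq_self_of_image
    (h : ∀ B, MeasurableSet B → μ ((· + -v) '' B) = μ B) : μ.map (· + v) = μ := by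
  ext B hB
  rw [map_apply (measurable_add_const v) hB, ← h B hB, Set.image_add_right, neg_neg]

theorem map_add_right_withDensity_eq_self (hμ : μ.map (· + v) = μ) {g : G → ℝ≥0∞}
    (hg : Measurable g) (hgv : ∀ x, g (x + v) = g x) :
    (μ.withDensity g).map (· + v) = μ.withDensity g := by
  ext A hA
  rw [map_apply (measurable_add_const v) hA,
    withDensity_apply _ (hA.preimage (measurable_add_const v)), withDensity_apply _ hA]
  conv_rhs => rw [← hμ, setLIntegral_map hA hg (measurable_add_const v)]
  simp only [hgv]

theorem hausdorffMeasure_restrict_apply {X : Type*} [EMetricSpace X] [MeasurableSpace X]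
    [BorelSpace X] {d : ℝ} (hd : 0 ≤ d) (s : Set X) {B : Set X} (hB : MeasurableSet B) :
    (μH[d].restrict s) B = μH[d] (Subtype.val ⁻¹' B : Set s) := by
  rw [restrict_apply hB,
    ← (isometry_subtype_coe (s := s)).hausdorffMeasure_image (Or.inl hd),
    Set.image_preimage_eq_inter_range, Subtype.range_coe]

end MeasureTheory.Measure

section OrthogonalProjection

variable {V : Type*} [NormedAddCommGroup V] [InnerProductSpace ℝ V] [MeasurableSpace V]
  [BorelSpace V] (K : Submodule ℝ V) [K.HasOrthogonalProjection]

theorem isAddLeftInvariant_map_orthogonalProjectionOnto {m : Measure V}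
    (hm : ∀ v ∈ K, m.map (· + v) = m) :
    (m.map K.orthogonalProjectionOnto).IsAddLeftInvariant := by
  have hp := K.orthogonalProjectionOnto.continuous.measurable
  refine ⟨fun v => ?_⟩
  have hcomm : (v + ·) ∘ K.orthogonalProjectionOnto =
      K.orthogonalProjectionOnto ∘ (· + (v : V)) := by
    funext x
    simp [add_comm]
  rw [Measure.map_map (measurable_const_add v) hp, hcomm,
    ← Measure.map_map hp (measurable_add_const _), hm v v.2]

theorem integrableOn_comp_starProjection_preimage {F : Type*} [NormedAddCommGroup F]
    {μ : Measure V} [IsFiniteMeasureOnCompacts μ] {ψ : V → F} (hψ : Continuous ψ)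
    (hψc : HasCompactSupport ψ) {C : Set V} (hC : IsCompact C) :
    IntegrableOn (fun x => ψ (K.starProjection x)) (Kᗮ.starProjection ⁻¹' C) μ := by
  have hS := hψc.isCompact.add hC
  refine (hψ.comp K.starProjection.continuous).continuousOn.integrableOn_compact hS
    |>.of_forall_sdiff_eq_zero (hC.measurableSet.preimage Kᗮ.starProjection.continuous.measurable)
    fun x ⟨hxC, hxS⟩ => image_eq_zero_of_notMem_tsupport (f := ψ) fun hxψ => hxS ?_
  exact ⟨_, hxψ, _, hxC, K.starProjection_add_starProjection_orthogonal x⟩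

variable [FiniteDimensional ℝ V]

theorem exists_map_withDensity_eq_smul_hausdorffMeasure {μ : Measure V}
    [IsFiniteMeasureOnCompacts μ] (hμ : ∀ v ∈ Kᗮ, μ.map (· + v) = μ) {ψ : V → ℝ}
    (hψ : Continuous ψ) (hψc : HasCompactSupport ψ) :
    ∃ c : ℝ≥0, (μ.withDensity fun x => ENNReal.ofReal (ψ (K.starProjection x))).map
      Kᗮ.orthogonalProjectionOnto = c • μH[finrank ℝ Kᗮ] := by
  set m := μ.withDensity fun x => ENNReal.ofReal (ψ (K.starProjection x))
  have hp := Kᗮ.orthogonalProjectionOnto.continuous.measurable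
  have : (m.map Kᗮ.orthogonalProjectionOnto).IsAddLeftInvariant := by
    refine isAddLeftInvariant_map_orthogonalProjectionOnto _ fun v hv =>
      Measure.map_add_right_withDensity_eq_self (hμ v hv) (by fun_prop) fun x => ?_
    rw [map_add, (K.starProjection_apply_eq_zero_iff).2 hv, add_zero]
  have : IsFiniteMeasureOnCompacts (m.map Kᗮ.orthogonalProjectionOnto) := by
    refine ⟨fun C hC => ?_⟩
    rw [Measure.map_apply hp hC.measurableSet, withDensity_apply _ (hp hC.measurableSet),
      ← Set.preimage_image_eq C Subtype.val_injective]
    exact (integrableOn_comp_starProjection_preimage K hψ hψc (hC.image continuous_subtype_val)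
      ).lintegral_lt_top
  exact ⟨_, Measure.isAddLeftInvariant_eq_smul _ _⟩

theorem exists_setLIntegral_starProjection_preimage_eq_mul {μ : Measure V}
    [IsFiniteMeasureOnCompacts μ] (hμ : ∀ v ∈ Kᗮ, μ.map (· + v) = μ) {ψ : V → ℝ}
    (hψ : Continuous ψ) (hψc : HasCompactSupport ψ) :
    ∃ c : ℝ≥0, ∀ B, MeasurableSet B →
      ∫⁻ x in Kᗮ.starProjection ⁻¹' B, ENNReal.ofReal (ψ (K.starProjection x)) ∂μ =
        c * (μH[finrank ℝ Kᗮ].restrict Kᗮ) B := by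
  obtain ⟨c, hc⟩ := exists_map_withDensity_eq_smul_hausdorffMeasure K hμ hψ hψc
  refine ⟨c, fun B hB => ?_⟩
  have hB' : MeasurableSet (Subtype.val ⁻¹' B : Set Kᗮ) := hB.preimage measurable_subtype_coe
  rw [Measure.hausdorffMeasure_restrict_apply (Nat.cast_nonneg _) _ hB,
    ← Measure.coe_nnreal_smul_apply, ← hc]
  exact (withDensity_apply _ (hB'.preimage (by fun_prop))).symm.trans
    (Measure.map_apply (by fun_prop) hB').symm

end OrthogonalProjection

/-- If a Radon measure `μ` on `ℝⁿ` is invariant under translations by `E^⊥`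
(`E` a `k`-dimensional subspace), then for every compactly supported continuous
`φ`, the pushforward along `π_{E^⊥}` of `μ` weighted by `φ ∘ π_E` is a scalar
multiple of Lebesgue measure (the `(n−k)`-dimensional Hausdorff measure) on `E^⊥`. -/
theorem stmt13 (n k : ℕ) (E : Submodule ℝ (EuclideanSpace ℝ (Fin n)))
    (hE : Module.finrank ℝ E = k)
    (μ : Measure (EuclideanSpace ℝ (Fin n))) (hreg : μ.Regular)
    (hinv : ∀ x ∈ Eᗮ, ∀ B : Set (EuclideanSpace ℝ (Fin n)), MeasurableSet B →
      μ ((fun y => y + x) '' B) = μ B)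
    (φ : EuclideanSpace ℝ (Fin n) → ℝ) (hφ : Continuous φ) (hφc : HasCompactSupport φ) :
    ∃ c : ℝ, ∀ B : Set (EuclideanSpace ℝ (Fin n)), MeasurableSet B → Bornology.IsBounded B →
      ∫ x in (fun x => ((Submodule.orthogonalProjectionOnto Eᗮ x : EuclideanSpace ℝ (Fin n)))) ⁻¹' B,
          φ ((Submodule.orthogonalProjectionOnto E x : EuclideanSpace ℝ (Fin n))) ∂μ =
        c * (((μH[(n : ℝ) - k]).restrict (Eᗮ : Set (EuclideanSpace ℝ (Fin n)))) B).toReal := by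
  have hdim : (n : ℝ) - k = finrank ℝ Eᗮ := by
    have hsum := E.finrank_add_finrank_orthogonal
    rw [hE, finrank_euclideanSpace_fin] at hsum
    rw [sub_eq_iff_eq_add']
    exact_mod_cast hsum.symm
  have hμ : ∀ v ∈ Eᗮ, μ.map (· + v) = μ := fun v hv =>
    Measure.map_add_right_eq_self_of_image fun B hB => hinv _ (neg_mem hv) B hB
  obtain ⟨cp, hcp⟩ := exists_setLIntegral_starProjection_preimage_eq_mul E hμ hφ hφc
  obtain ⟨cn, hcn⟩ := exists_setLIntegral_starProjection_preimage_eq_mul E hμ hφ.neg hφc.neg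
  refine ⟨cp - cn, fun B hB hBb => ?_⟩
  have hint := (integrableOn_comp_starProjection_preimage E (μ := μ) hφ hφc
    hBb.isCompact_closure).mono_set (Set.preimage_mono subset_closure)
  change ∫ x in Eᗮ.starProjection ⁻¹' B, φ (E.starProjection x) ∂μ = _
  rw [integral_eq_lintegral_pos_part_sub_lintegral_neg_part hint, hdim, hcp B hB]
  simp only [Pi.neg_apply] at hcn
  rw [hcn B hB, ENNReal.toReal_mul, ENNReal.toReal_mul, ENNReal.coe_toReal, ENNReal.coe_toReal,
    sub_mul]
end
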